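/- Proposition 1: Let X, Y, Z be random vectors in ℝ^{p₁}, ℝ^{p₂}, ℝ^{p₃} on a common probability space, where the law of Z is the multivariate Gaussian with mean 0 and positive definite covariance Σ_Z. Suppose g : ℝ^{p₃} → ℝ^{p₁×p₂} is measurable and differentiable, such that for every i, j the random variable g(Z)[i,j] is a version of the conditional expectation E[XᵢYⱼ | σ(Z)]; assume XᵢYⱼ, XᵢYⱼZ_k, each partial derivative (∂g_{ij}/∂z_k)(Z), and each z ↦ z_k·g_{ij}(z) are integrable. Define the generalized liquid association tensor Φ with entries Φ[i,j,k] = E[(∂g_{ij}/∂z_k)(Z)] and the tensor Δ with entries Δ[i,j,k] = E[XᵢYⱼZ_k]. Then Φ[i,j,k] = Σ_{k'=1}^{p₃} (Σ_Z^{-1})[k,k']·Δ[i,j,k'] for all i, j, k; that is, Φ = Δ ×₃ Σ_Z^{-1}. -/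

import Mathlib

open MeasureTheory ProbabilityTheory Real Matrix

/-- The density of the multivariate Gaussian distribution on `ℝ^d` with mean `0` and
(positive definite) covariance matrix `S`. -/
noncomputable def mvGaussianPDF {d : ℕ} (S : Matrix (Fin d) (Fin d) ℝ) (z : Fin d → ℝ) : ℝ :=
  (Real.sqrt ((2 * π) ^ d * S.det))⁻¹ * Real.exp (-(z ⬝ᵥ S⁻¹.mulVec z) / 2)

/-- The multivariate Gaussian measure on `ℝ^d` with mean `0` and covariance matrix `S`. -/
noncomputable def mvGaussian {d : ℕ} (S : Matrix (Fin d) (Fin d) ℝ) :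
    Measure (Fin d → ℝ) :=
  volume.withDensity (fun z => ENNReal.ofReal (mvGaussianPDF S z))

/-!
Stein's identity for the Gaussian: the density `ρ` of `N(0, Σ)` satisfies
`∂ₖρ(z) = -(Σ⁻¹z)ₖ ρ(z)`, so integrating `∂ₖg · ρ` by parts gives
`E[∂ₖg(Z)] = ∑ₖ' (Σ⁻¹)ₖₖ' E[Zₖ' g(Z)]`. Since `g(Z) = E[XᵢYⱼ | σ(Z)]` and `Zₖ'` is
`σ(Z)`-measurable, `E[Zₖ' g(Z)] = E[XᵢYⱼZₖ'] = Δ[i,j,k']`.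
-/

section GaussianDensity

variable {d : ℕ} (S : Matrix (Fin d) (Fin d) ℝ)

lemma continuous_mvGaussianPDF : Continuous (mvGaussianPDF S) := by
  unfold mvGaussianPDF
  fun_prop

lemma mvGaussianPDF_nonneg (z : Fin d → ℝ) : 0 ≤ mvGaussianPDF S z := by
  unfold mvGaussianPDF
  positivity

lemma integrable_mvGaussian_iff {φ : (Fin d → ℝ) → ℝ} :
    Integrable φ (mvGaussian S) ↔ Integrable (fun z => φ z * mvGaussianPDF S z) := by
  rw [mvGaussian, integrable_withDensity_iff (continuous_mvGaussianPDF S).measurable.ennreal_ofReal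
    (ae_of_all _ fun _ => ENNReal.ofReal_lt_top)]
  simp_rw [ENNReal.toReal_ofReal (mvGaussianPDF_nonneg S _)]

lemma integral_mvGaussian (φ : (Fin d → ℝ) → ℝ) :
    ∫ z, φ z ∂mvGaussian S = ∫ z, φ z * mvGaussianPDF S z := by
  rw [mvGaussian, integral_withDensity_eq_integral_toReal_smul
    (continuous_mvGaussianPDF S).measurable.ennreal_ofReal
    (ae_of_all _ fun _ => ENNReal.ofReal_lt_top)]
  simp_rw [ENNReal.toReal_ofReal (mvGaussianPDF_nonneg S _), smul_eq_mul, mul_comm]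

lemma dotProduct_mulVec_add_smul_sq {A : Matrix (Fin d) (Fin d) ℝ} (hA : A.IsSymm)
    (z v : Fin d → ℝ) (t : ℝ) :
    (z + t • v) ⬝ᵥ A *ᵥ (z + t • v)
      = z ⬝ᵥ A *ᵥ z + t * (2 * (v ⬝ᵥ A *ᵥ z)) + t ^ 2 * (v ⬝ᵥ A *ᵥ v) := by
  have hcomm : z ⬝ᵥ A *ᵥ v = v ⬝ᵥ A *ᵥ z := by
    rw [dotProduct_mulVec, ← mulVec_transpose, hA.eq, dotProduct_comm]
  simp only [mulVec_add, mulVec_smul, add_dotProduct, dotProduct_add, smul_dotProduct,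
    dotProduct_smul, hcomm, smul_eq_mul]
  ring

lemma hasLineDerivAt_mvGaussianPDF (hS : S⁻¹.IsSymm) (z v : Fin d → ℝ) :
    HasLineDerivAt ℝ (mvGaussianPDF S) (-(v ⬝ᵥ S⁻¹ *ᵥ z) * mvGaussianPDF S z) z v := by
  set b := v ⬝ᵥ S⁻¹ *ᵥ z
  have hq : HasDerivAt
      (fun t : ℝ => z ⬝ᵥ S⁻¹ *ᵥ z + t * (2 * b) + t ^ 2 * (v ⬝ᵥ S⁻¹ *ᵥ v)) (2 * b) 0 := by
    simpa using (((hasDerivAt_id' (0 : ℝ)).mul_const (2 * b)).const_add _).fun_add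
      ((hasDerivAt_pow 2 (0 : ℝ)).mul_const (v ⬝ᵥ S⁻¹ *ᵥ v))
  unfold HasLineDerivAt mvGaussianPDF
  simp_rw [dotProduct_mulVec_add_smul_sq hS]
  refine (((hq.fun_neg.div_const 2).exp).const_mul (√((2 * π) ^ d * S.det))⁻¹).congr_deriv ?_
  simp only [zero_mul, add_zero, ne_eq, OfNat.ofNat_ne_zero, not_false_eq_true, zero_pow]
  ring

end GaussianDensity

theorem integral_fderiv_mvGaussian {d : ℕ} {S : Matrix (Fin d) (Fin d) ℝ} (hS : S⁻¹.IsSymm)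
    {f : (Fin d → ℝ) → ℝ} (v : Fin d → ℝ) (hf : Differentiable ℝ f)
    (hfi : Integrable f (mvGaussian S))
    (hf' : Integrable (fun z => fderiv ℝ f z v) (mvGaussian S))
    (hvf : Integrable (fun z => (v ⬝ᵥ S⁻¹ *ᵥ z) * f z) (mvGaussian S)) :
    ∫ z, fderiv ℝ f z v ∂mvGaussian S = ∫ z, (v ⬝ᵥ S⁻¹ *ᵥ z) * f z ∂mvGaussian S := by
  rw [integrable_mvGaussian_iff] at hfi hf' hvf
  have hibp := integral_bilinear_hasLineDerivAt_right_eq_neg_left_of_integrable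
    (B := ContinuousLinearMap.mul ℝ ℝ) (g' := fun z => -(v ⬝ᵥ S⁻¹ *ᵥ z) * mvGaussianPDF S z)
    hf' (hvf.neg.congr (ae_of_all _ fun z => by
      simp only [ContinuousLinearMap.mul_apply', Pi.neg_apply]; ring))
    hfi (fun z _ => (hf z).hasFDerivAt.hasLineDerivAt v)
    (fun z _ => hasLineDerivAt_mvGaussianPDF S hS z v)
  simp only [ContinuousLinearMap.mul_apply'] at hibp
  calc ∫ z, fderiv ℝ f z v ∂mvGaussian S
      = -∫ z, f z * (-(v ⬝ᵥ S⁻¹ *ᵥ z) * mvGaussianPDF S z) := by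
        rw [integral_mvGaussian, hibp, neg_neg]
    _ = ∫ z, (v ⬝ᵥ S⁻¹ *ᵥ z) * f z ∂mvGaussian S := by
        rw [integral_mvGaussian, ← integral_neg]
        congr 1 with z
        ring

theorem integral_fderiv_single_mvGaussian {d : ℕ} {S : Matrix (Fin d) (Fin d) ℝ}
    (hS : S⁻¹.IsSymm) {f : (Fin d → ℝ) → ℝ} (k : Fin d) (hf : Differentiable ℝ f)
    (hfi : Integrable f (mvGaussian S))
    (hf' : Integrable (fun z => fderiv ℝ f z (Pi.single k 1)) (mvGaussian S))
    (hzf : ∀ k', Integrable (fun z => z k' * f z) (mvGaussian S)) :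
    ∫ z, fderiv ℝ f z (Pi.single k 1) ∂mvGaussian S
      = ∑ k', S⁻¹ k k' * ∫ z, z k' * f z ∂mvGaussian S := by
  have hsum : ∀ z, (Pi.single k 1 ⬝ᵥ S⁻¹ *ᵥ z) * f z = ∑ k', S⁻¹ k k' * (z k' * f z) := by
    intro z
    rw [single_dotProduct, one_mul]
    simp only [mulVec, dotProduct, Finset.sum_mul, mul_assoc]
  have hint : ∀ k', Integrable (fun z => S⁻¹ k k' * (z k' * f z)) (mvGaussian S) :=
    fun k' => (hzf k').const_mul _
  have hvf : Integrable (fun z => (Pi.single k 1 ⬝ᵥ S⁻¹ *ᵥ z) * f z) (mvGaussian S) := by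
    simpa only [hsum] using integrable_finsetSum _ fun k' _ => hint k'
  rw [integral_fderiv_mvGaussian hS _ hf hfi hf' hvf, funext hsum,
    integral_finsetSum _ fun k' _ => hint k']
  simp only [integral_const_mul]

theorem integral_mul_condExp_of_stronglyMeasurable_left {Ω : Type*} {m m₀ : MeasurableSpace Ω}
    {μ : Measure Ω} (hm : m ≤ m₀) [SigmaFinite (μ.trim hm)] {f g : Ω → ℝ}
    (hf : StronglyMeasurable[m] f) (hfg : Integrable (f * g) μ) (hg : Integrable g μ) :
    ∫ ω, f ω * μ[g | m] ω ∂μ = ∫ ω, f ω * g ω ∂μ := by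
  calc ∫ ω, f ω * μ[g | m] ω ∂μ = ∫ ω, μ[f * g | m] ω ∂μ :=
        integral_congr_ae (condExp_mul_of_stronglyMeasurable_left hf hfg hg).symm
    _ = ∫ ω, f ω * g ω ∂μ := integral_condExp hm

theorem integral_mul_comp_eq_integral_map_mul_of_ae_eq_condExp {Ω β : Type*}
    [MeasurableSpace Ω] [MeasurableSpace β] {P : Measure Ω} [IsFiniteMeasure P] {Z : Ω → β}
    (hZ : Measurable Z) {ξ : Ω → ℝ} {φ h : β → ℝ} (hφ : Measurable φ) (hh : Measurable h)
    (hcond : (fun ω => h (Z ω)) =ᵐ[P] P[ξ | MeasurableSpace.comap Z inferInstance])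
    (hξ : Integrable ξ P) (hξφ : Integrable (fun ω => ξ ω * φ (Z ω)) P) :
    ∫ ω, ξ ω * φ (Z ω) ∂P = ∫ z, φ z * h z ∂P.map Z := by
  have hφZ : StronglyMeasurable[MeasurableSpace.comap Z inferInstance] fun ω => φ (Z ω) :=
    (hφ.comp (comap_measurable Z)).stronglyMeasurable
  rw [integral_map hZ.aemeasurable (by fun_prop)]
  calc ∫ ω, ξ ω * φ (Z ω) ∂P
      = ∫ ω, φ (Z ω) * P[ξ | MeasurableSpace.comap Z inferInstance] ω ∂P := by
        rw [integral_mul_condExp_of_stronglyMeasurable_left hZ.comap_le hφZ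
          (hξφ.congr (ae_of_all _ fun _ => mul_comm _ _)) hξ]
        simp_rw [mul_comm]
    _ = ∫ ω, φ (Z ω) * h (Z ω) ∂P :=
        integral_congr_ae (hcond.mono fun ω hω => congrArg (φ (Z ω) * ·) hω.symm)

theorem gla_eq_mode3_product_general {Ω : Type*} [MeasurableSpace Ω]
    (P : Measure Ω) [IsProbabilityMeasure P] {p₁ p₂ p₃ : ℕ}
    (X : Ω → Fin p₁ → ℝ) (Y : Ω → Fin p₂ → ℝ) (Z : Ω → Fin p₃ → ℝ)
    (hZ : Measurable Z)
    (SZ : Matrix (Fin p₃) (Fin p₃) ℝ) (hSZ : SZ.PosDef)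
    (hlawZ : P.map Z = mvGaussian SZ)
    (g : (Fin p₃ → ℝ) → Matrix (Fin p₁) (Fin p₂) ℝ)
    (hgd : ∀ i j, Differentiable ℝ (fun z => g z i j))
    (hcond : ∀ i j, (fun ω => g (Z ω) i j) =ᵐ[P]
      P[fun ω => X ω i * Y ω j | MeasurableSpace.comap Z inferInstance])
    (hXY : ∀ i j, Integrable (fun ω => X ω i * Y ω j) P)
    (hXYZ : ∀ i j k, Integrable (fun ω => X ω i * Y ω j * Z ω k) P)
    (hpart : ∀ i j k,
      Integrable (fun ω => fderiv ℝ (fun z => g z i j) (Z ω) (Pi.single k 1)) P)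
    (hzg : ∀ i j k, Integrable (fun z => z k * g z i j) (P.map Z))
    (Φ : Fin p₁ → Fin p₂ → Fin p₃ → ℝ)
    (hΦ : ∀ i j k, Φ i j k = ∫ ω, fderiv ℝ (fun z => g z i j) (Z ω) (Pi.single k 1) ∂P)
    (Δ : Fin p₁ → Fin p₂ → Fin p₃ → ℝ)
    (hΔ : ∀ i j k, Δ i j k = ∫ ω, X ω i * Y ω j * Z ω k ∂P) :
    ∀ i j k, Φ i j k = ∑ k' : Fin p₃, SZ⁻¹ k k' * Δ i j k' := by
  intro i j k
  have hgm : Measurable fun z => g z i j := (hgd i j).continuous.measurable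
  have hpart_meas : Measurable fun z => fderiv ℝ (fun z => g z i j) z (Pi.single k 1) :=
    measurable_fderiv_apply_const ℝ _ _
  have hg_int : Integrable (fun z => g z i j) (mvGaussian SZ) := by
    rw [← hlawZ, integrable_map_measure hgm.aestronglyMeasurable hZ.aemeasurable]
    exact integrable_condExp.congr (hcond i j).symm
  have hpart_int : Integrable (fun z => fderiv ℝ (fun z => g z i j) z (Pi.single k 1))
      (mvGaussian SZ) := by
    rw [← hlawZ, integrable_map_measure hpart_meas.aestronglyMeasurable hZ.aemeasurable]
    exact hpart i j k
  have hΔ_gauss : ∀ k', Δ i j k' = ∫ z, z k' * g z i j ∂mvGaussian SZ := fun k' => by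
    rw [hΔ, ← hlawZ]
    exact integral_mul_comp_eq_integral_map_mul_of_ae_eq_condExp hZ (measurable_pi_apply k') hgm
      (hcond i j) (hXY i j) (hXYZ i j k')
  rw [hΦ, ← integral_map hZ.aemeasurable hpart_meas.aestronglyMeasurable, hlawZ,
    integral_fderiv_single_mvGaussian (isHermitian_iff_isSymm.mp hSZ.isHermitian.inv) k
      (hgd i j) hg_int hpart_int fun k' => hlawZ ▸ hzg i j k']
  simp only [hΔ_gauss]

/-- Proposition 1: if `Z ∼ N(0, Σ_Z)` with `Σ_Z` positive definite, and `g(Z)[i,j]` is a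
version of `E[XᵢYⱼ | σ(Z)]` for a differentiable `g`, then the generalized liquid association
tensor `Φ[i,j,k] = E[∂g_ij/∂z_k (Z)]` satisfies `Φ = Δ ×₃ Σ_Z⁻¹`, where
`Δ[i,j,k] = E[XᵢYⱼZ_k]`. -/
theorem gla_eq_mode3_product {Ω : Type*} [MeasurableSpace Ω]
    (P : Measure Ω) [IsProbabilityMeasure P] {p₁ p₂ p₃ : ℕ}
    (X : Ω → Fin p₁ → ℝ) (Y : Ω → Fin p₂ → ℝ) (Z : Ω → Fin p₃ → ℝ)
    (hX : Measurable X) (hY : Measurable Y) (hZ : Measurable Z)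
    (SZ : Matrix (Fin p₃) (Fin p₃) ℝ) (hSZ : SZ.PosDef)
    (hlawZ : P.map Z = mvGaussian SZ)
    (g : (Fin p₃ → ℝ) → Matrix (Fin p₁) (Fin p₂) ℝ)
    (hgm : ∀ i j, Measurable (fun z => g z i j))
    (hgd : ∀ i j, Differentiable ℝ (fun z => g z i j))
    (hcond : ∀ i j, (fun ω => g (Z ω) i j) =ᵐ[P]
      P[fun ω => X ω i * Y ω j | MeasurableSpace.comap Z inferInstance])
    (hXY : ∀ i j, Integrable (fun ω => X ω i * Y ω j) P)
    (hXYZ : ∀ i j k, Integrable (fun ω => X ω i * Y ω j * Z ω k) P)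
    (hpart : ∀ i j k,
      Integrable (fun ω => fderiv ℝ (fun z => g z i j) (Z ω) (Pi.single k 1)) P)
    (hzg : ∀ i j k, Integrable (fun z => z k * g z i j) (P.map Z))
    (Φ : Fin p₁ → Fin p₂ → Fin p₃ → ℝ)
    (hΦ : ∀ i j k, Φ i j k = ∫ ω, fderiv ℝ (fun z => g z i j) (Z ω) (Pi.single k 1) ∂P)
    (Δ : Fin p₁ → Fin p₂ → Fin p₃ → ℝ)
    (hΔ : ∀ i j k, Δ i j k = ∫ ω, X ω i * Y ω j * Z ω k ∂P) :
    ∀ i j k, Φ i j k = ∑ k' : Fin p₃, SZ⁻¹ k k' * Δ i j k' :=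
  gla_eq_mode3_product_general P X Y Z hZ SZ hSZ hlawZ g hgd hcond hXY hXYZ hpart hzg Φ hΦ Δ hΔ
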